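/- There exists a nonzero polynomial p ∈ ℂ[a,b,c] such that whenever p(a,b,c) ≠ 0, the system (S) has exactly 1296 solutions (u,v,w) ∈ ℂ³. -/

import Mathlib

/-- The system (S): with ψ = u³+v³+w³, χ = u³v³+u³w³+v³w³, λ = 216u³v³w³,
the equations ψ² − 12χ = a, ψ⁴ + λψ = b, ψ⁶ − (5/2)λψ³ − (1/8)λ² = c. -/
def sysS (a b c u v w : ℂ) : Prop :=
  (u ^ 3 + v ^ 3 + w ^ 3) ^ 2
      - 12 * (u ^ 3 * v ^ 3 + u ^ 3 * w ^ 3 + v ^ 3 * w ^ 3) = a ∧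
    (u ^ 3 + v ^ 3 + w ^ 3) ^ 4
      + (216 * (u ^ 3 * v ^ 3 * w ^ 3)) * (u ^ 3 + v ^ 3 + w ^ 3) = b ∧
    (u ^ 3 + v ^ 3 + w ^ 3) ^ 6
      - (5 / 2) * (216 * (u ^ 3 * v ^ 3 * w ^ 3)) * (u ^ 3 + v ^ 3 + w ^ 3) ^ 3
      - (1 / 8) * (216 * (u ^ 3 * v ^ 3 * w ^ 3)) ^ 2 = c

open Polynomial in
lemma roots_card_of_sep (p : Polynomial ℂ) (hp : p ≠ 0)
    (h : ∀ z : ℂ, p.eval z = 0 → p.derivative.eval z ≠ 0) :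
    p.roots.toFinset.card = p.natDegree := by
  have hsep : p.Separable := by
    rw [Polynomial.Separable, Polynomial.isCoprime_iff_aeval_ne_zero_of_isAlgClosed ℂ ℂ]
    intro z
    by_cases hz : Polynomial.aeval z p = 0
    · right
      simp only [Polynomial.coe_aeval_eq_eval] at hz ⊢
      exact h z hz
    · left; exact hz
  rw [Multiset.toFinset_card_of_nodup (Polynomial.nodup_roots hsep)]
  exact Polynomial.splits_iff_card_roots.mp (IsAlgClosed.splits p)

open Polynomial in
lemma mem_roots_toFinset (p : Polynomial ℂ) (hp : p ≠ 0) (z : ℂ) :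
    z ∈ p.roots.toFinset ↔ p.eval z = 0 := by
  rw [Multiset.mem_toFinset, Polynomial.mem_roots hp]; exact Iff.rfl
open Polynomial

noncomputable def Qpoly (b c : ℂ) : Polynomial ℂ :=
  C 27 * X ^ 8 - C (18 * b) * X ^ 4 - C (8 * c) * X ^ 2 - C (b ^ 2)

lemma Qpoly_natDegree (b c : ℂ) : (Qpoly b c).natDegree = 8 := by
  unfold Qpoly; compute_degree!

lemma Qpoly_ne (b c : ℂ) : Qpoly b c ≠ 0 := by
  intro h
  have := Qpoly_natDegree b c
  rw [h] at this; simp at this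

lemma Qpoly_eval (b c z : ℂ) :
    (Qpoly b c).eval z = 27 * z ^ 8 - 18 * b * z ^ 4 - 8 * c * z ^ 2 - b ^ 2 := by
  simp [Qpoly]

lemma Qpoly_deriv (b c z : ℂ) :
    ((Qpoly b c).derivative).eval z = 216 * z ^ 7 - 72 * b * z ^ 3 - 16 * c * z := by
  unfold Qpoly
  simp only [derivative_sub, derivative_mul, derivative_C, derivative_X_pow, zero_mul, zero_add,
    eval_sub, eval_mul, eval_pow, eval_X, eval_C, eval_natCast, eval_zero]
  push_cast
  ring

noncomputable def cubPoly (z : ℂ) : Polynomial ℂ := X ^ 3 - C z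

lemma cubPoly_natDegree (z : ℂ) : (cubPoly z).natDegree = 3 := by
  unfold cubPoly; compute_degree!

lemma cubPoly_ne (z : ℂ) : cubPoly z ≠ 0 := by
  intro h; have := cubPoly_natDegree z; rw [h] at this; simp at this

lemma cubPoly_eval (z u : ℂ) : (cubPoly z).eval u = u ^ 3 - z := by simp [cubPoly]

lemma cubPoly_deriv (z u : ℂ) : ((cubPoly z).derivative).eval u = 3 * u ^ 2 := by
  simp [cubPoly]
  left; norm_num

noncomputable def Cpoly (ψ E2 E3 : ℂ) : Polynomial ℂ :=
  X ^ 3 - C ψ * X ^ 2 + C E2 * X - C E3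

lemma Cpoly_natDegree (ψ E2 E3 : ℂ) : (Cpoly ψ E2 E3).natDegree = 3 := by
  unfold Cpoly; compute_degree!

lemma Cpoly_ne (ψ E2 E3 : ℂ) : Cpoly ψ E2 E3 ≠ 0 := by
  intro h; have := Cpoly_natDegree ψ E2 E3; rw [h] at this; simp at this

lemma Cpoly_eval (ψ E2 E3 t : ℂ) :
    (Cpoly ψ E2 E3).eval t = t ^ 3 - ψ * t ^ 2 + E2 * t - E3 := by simp [Cpoly]

lemma Cpoly_deriv (ψ E2 E3 t : ℂ) :
    ((Cpoly ψ E2 E3).derivative).eval t = 3 * t ^ 2 - 2 * ψ * t + E2 := by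
  simp [Cpoly]; ring

lemma RF_card (b c : ℂ) (hb : b ≠ 0) (hbc : b ^ 3 - c ^ 2 ≠ 0) :
    (Qpoly b c).roots.toFinset.card = 8 := by
  rw [roots_card_of_sep _ (Qpoly_ne b c) ?_, Qpoly_natDegree]
  intro z hz hz'
  rw [Qpoly_eval] at hz
  rw [Qpoly_deriv] at hz'
  have hz0 : z ≠ 0 := by
    rintro rfl
    apply hb
    have : b ^ 2 = 0 := by linear_combination -hz
    exact pow_eq_zero_iff (n := 2) (by norm_num) |>.mp this
  have hq' : 108 * (z ^ 2) ^ 3 - 36 * b * z ^ 2 - 8 * c = 0 := by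
    have h2 : 2 * z * (108 * (z ^ 2) ^ 3 - 36 * b * z ^ 2 - 8 * c) = 0 := by
      linear_combination hz'
    rcases mul_eq_zero.mp h2 with h | h
    · exact absurd (by simpa using h) hz0
    · exact h
  have hzero : b ^ 2 * (b ^ 3 - c ^ 2) ^ 2 = 0 := by
    linear_combination (-(b^6 - b^3*c^2) - (9/4)*(b^2*c^2 - b^5)*z^4) * hz +
      (-(1/8)*(b^2*c^3 - b^5*c) - (7/16)*(b^3*c^2 - b^6)*z^2 - (9/16)*(b^5 - b^2*c^2)*z^6) * hq'
  rcases mul_eq_zero.mp hzero with h | h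
  · exact hb (pow_eq_zero_iff (n := 2) (by norm_num) |>.mp h)
  · exact hbc (pow_eq_zero_iff (n := 2) (by norm_num) |>.mp h)

lemma psi_ne (b c ψ : ℂ) (hb : b ≠ 0)
    (hψq : 27 * ψ ^ 8 - 18 * b * ψ ^ 4 - 8 * c * ψ ^ 2 - b ^ 2 = 0) : ψ ≠ 0 := by
  rintro rfl
  apply hb
  have : b ^ 2 = 0 := by linear_combination -hψq
  exact pow_eq_zero_iff (n := 2) (by norm_num) |>.mp this

lemma e3num_ne (b c ψ : ℂ) (hb : b ≠ 0) (hbc : b ^ 3 - c ^ 2 ≠ 0)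
    (hψq : 27 * ψ ^ 8 - 18 * b * ψ ^ 4 - 8 * c * ψ ^ 2 - b ^ 2 = 0) : b - ψ ^ 4 ≠ 0 := by
  intro h4
  have hzero : b ^ 4 - b * c ^ 2 = 0 := by
    linear_combination ((1/8)*b^2 + (1/8)*c*ψ^2) * hψq +
      (-(c^2 - (9/8)*b^3) + (9/8)*b*c*ψ^2 + (27/8)*b^2*ψ^4 + (27/8)*c*ψ^6) * h4
  have : b * (b ^ 3 - c ^ 2) = 0 := by linear_combination hzero
  rcases mul_eq_zero.mp this with h | h
  · exact hb h
  · exact hbc h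

noncomputable def e2v (a ψ : ℂ) : ℂ := (ψ ^ 2 - a) / 12
noncomputable def e3v (b ψ : ℂ) : ℂ := (b - ψ ^ 4) / (216 * ψ)

lemma e3v_ne (b c ψ : ℂ) (hb : b ≠ 0) (hbc : b ^ 3 - c ^ 2 ≠ 0)
    (hψq : 27 * ψ ^ 8 - 18 * b * ψ ^ 4 - 8 * c * ψ ^ 2 - b ^ 2 = 0) : e3v b ψ ≠ 0 := by
  have hψ0 := psi_ne b c ψ hb hψq
  exact div_ne_zero (e3num_ne b c ψ hb hbc hψq) (by simp [hψ0])

lemma h2c (a ψ : ℂ) : 12 * e2v a ψ = ψ ^ 2 - a := by unfold e2v; ring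

lemma h3c (b c ψ : ℂ) (hb : b ≠ 0)
    (hψq : 27 * ψ ^ 8 - 18 * b * ψ ^ 4 - 8 * c * ψ ^ 2 - b ^ 2 = 0) :
    216 * ψ * e3v b ψ = b - ψ ^ 4 := by
  have hψ0 := psi_ne b c ψ hb hψq
  unfold e3v
  field_simp

lemma disc_ne (a b c ψ : ℂ) (hb : b ≠ 0) (hbc : b ^ 3 - c ^ 2 ≠ 0)
    (habc : a ^ 3 - 3 * a * b + 2 * c ≠ 0)
    (hψq : 27 * ψ ^ 8 - 18 * b * ψ ^ 4 - 8 * c * ψ ^ 2 - b ^ 2 = 0) :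
    18 * ψ * e2v a ψ * e3v b ψ - 4 * ψ ^ 3 * e3v b ψ + ψ ^ 2 * (e2v a ψ) ^ 2
      - 4 * (e2v a ψ) ^ 3 - 27 * (e3v b ψ) ^ 2 ≠ 0 := by
  have hψ0 := psi_ne b c ψ hb hψq
  have h2 := h2c a ψ
  have h3 := h3c b c ψ hb hψq
  set E := e2v a ψ with hE
  set F := e3v b ψ with hF
  intro h0
  have key : 1728 * ψ ^ 2 * (18 * ψ * E * F - 4 * ψ ^ 3 * F + ψ ^ 2 * E ^ 2
      - 4 * E ^ 3 - 27 * F ^ 2) = 4 * (a ^ 3 - 3 * a * b + 2 * c) * ψ ^ 2 := by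
    linear_combination hψq +
      (-4*ψ^2*a^2 + 48*ψ^2*E*a - 576*ψ^2*E^2 + 2592*ψ^3*F - 4*ψ^4*a + 96*ψ^4*E + 8*ψ^6) * h2 +
      (-b - 216*ψ*F - 12*ψ^2*a - 19*ψ^4) * h3
  rw [h0, mul_zero] at key
  rcases mul_eq_zero.mp key.symm with h | h
  · rcases mul_eq_zero.mp h with h' | h'
    · norm_num at h'
    · exact habc h'
  · exact hψ0 (pow_eq_zero_iff (n := 2) (by norm_num) |>.mp h)

lemma K_card (a b c ψ : ℂ) (hb : b ≠ 0) (hbc : b ^ 3 - c ^ 2 ≠ 0)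
    (habc : a ^ 3 - 3 * a * b + 2 * c ≠ 0)
    (hψq : 27 * ψ ^ 8 - 18 * b * ψ ^ 4 - 8 * c * ψ ^ 2 - b ^ 2 = 0) :
    (Cpoly ψ (e2v a ψ) (e3v b ψ)).roots.toFinset.card = 3 := by
  have hΔ := disc_ne a b c ψ hb hbc habc hψq
  set E := e2v a ψ
  set F := e3v b ψ
  rw [roots_card_of_sep _ (Cpoly_ne ψ E F) ?_, Cpoly_natDegree]
  intro t hC hC'
  rw [Cpoly_eval] at hC
  rw [Cpoly_deriv] at hC'
  apply hΔ
  linear_combination (27*F - 15*ψ*E + 4*ψ^3 - (6*ψ^2 - 18*E)*t) * hC +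
    (-(4*E^2 - 3*ψ*F - ψ^2*E) - (9*F - 7*ψ*E + 2*ψ^3)*t - (6*E - 2*ψ^2)*t^2) * hC'

noncomputable def cubF (z : ℂ) : Finset ℂ := (cubPoly z).roots.toFinset

lemma cubF_mem (z u : ℂ) : u ∈ cubF z ↔ u ^ 3 = z := by
  rw [cubF, mem_roots_toFinset _ (cubPoly_ne z), cubPoly_eval, sub_eq_zero]

lemma cubF_card (z : ℂ) (hz : z ≠ 0) : (cubF z).card = 3 := by
  rw [cubF, roots_card_of_sep _ (cubPoly_ne z) ?_, cubPoly_natDegree]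
  intro u hu hu'
  rw [cubPoly_eval] at hu
  rw [cubPoly_deriv] at hu'
  have hu0 : u = 0 := by
    have := mul_eq_zero.mp hu'
    rcases this with h | h
    · norm_num at h
    · exact pow_eq_zero_iff (n := 2) (by norm_num) |>.mp h
  rw [hu0] at hu
  apply hz
  linear_combination -hu

lemma two_of_three (r1 r2 r3 y z : ℂ) (h1 : r1 ≠ 0)
    (hsum : y + z = r2 + r3) (hprod : r1 * (y * z) = r1 * (r2 * r3)) :
    (y = r2 ∧ z = r3) ∨ (y = r3 ∧ z = r2) := by
  have hyz : y * z = r2 * r3 := mul_left_cancel₀ h1 hprod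
  have hfac : (y - r2) * (y - r3) = 0 := by linear_combination y * hsum - hyz
  rcases mul_eq_zero.mp hfac with h | h
  · left
    have hy : y = r2 := by linear_combination h
    exact ⟨hy, by linear_combination hsum - h⟩
  · right
    have hy : y = r3 := by linear_combination h
    exact ⟨hy, by linear_combination hsum - h⟩

open scoped Classical in
noncomputable def TrF (a b ψ : ℂ) : Finset (ℂ × ℂ × ℂ) :=
  ((Cpoly ψ (e2v a ψ) (e3v b ψ)).roots.toFinset ×ˢ
    (Cpoly ψ (e2v a ψ) (e3v b ψ)).roots.toFinset ×ˢ
      (Cpoly ψ (e2v a ψ) (e3v b ψ)).roots.toFinset).filter fun t =>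
    t.1 + t.2.1 + t.2.2 = ψ ∧
      t.1 * t.2.1 + t.1 * t.2.2 + t.2.1 * t.2.2 = e2v a ψ ∧
        t.1 * (t.2.1 * t.2.2) = e3v b ψ

lemma mem_TrF (a b ψ : ℂ) (t : ℂ × ℂ × ℂ) :
    t ∈ TrF a b ψ ↔
      (t.1 + t.2.1 + t.2.2 = ψ ∧
        t.1 * t.2.1 + t.1 * t.2.2 + t.2.1 * t.2.2 = e2v a ψ ∧
          t.1 * (t.2.1 * t.2.2) = e3v b ψ) := by
  unfold TrF
  rw [Finset.mem_filter]
  constructor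
  · exact And.right
  · intro h
    obtain ⟨h1, h2, h3⟩ := h
    refine ⟨?_, h1, h2, h3⟩
    rw [Finset.mem_product, Finset.mem_product]
    refine ⟨?_, ?_, ?_⟩ <;>
      rw [mem_roots_toFinset _ (Cpoly_ne _ _ _), Cpoly_eval]
    · linear_combination t.1 ^ 2 * h1 - t.1 * h2 + h3
    · linear_combination t.2.1 ^ 2 * h1 - t.2.1 * h2 + h3
    · linear_combination t.2.2 ^ 2 * h1 - t.2.2 * h2 + h3

lemma TrF_card (a b c ψ : ℂ) (hb : b ≠ 0) (hbc : b ^ 3 - c ^ 2 ≠ 0)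
    (habc : a ^ 3 - 3 * a * b + 2 * c ≠ 0)
    (hψq : 27 * ψ ^ 8 - 18 * b * ψ ^ 4 - 8 * c * ψ ^ 2 - b ^ 2 = 0) :
    (TrF a b ψ).card = 6 := by
  classical
  obtain ⟨r1, r2, r3, h12, h13, h23, hK⟩ :=
    Finset.card_eq_three.mp (K_card a b c ψ hb hbc habc hψq)
  have hE3 := e3v_ne b c ψ hb hbc hψq
  set E := e2v a ψ with hE
  set F := e3v b ψ with hF
  have hmemK : ∀ s : ℂ, s ∈ (Cpoly ψ E F).roots.toFinset ↔
      s ^ 3 - ψ * s ^ 2 + E * s - F = 0 := by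
    intro s
    rw [mem_roots_toFinset _ (Cpoly_ne _ _ _), Cpoly_eval]
  have hr : ∀ s : ℂ, s ^ 3 - ψ * s ^ 2 + E * s - F = 0 ↔ (s = r1 ∨ s = r2 ∨ s = r3) := by
    intro s
    rw [← hmemK, hK]
    simp
  have h1 : r1 ^ 3 - ψ * r1 ^ 2 + E * r1 - F = 0 := (hr r1).mpr (Or.inl rfl)
  have h2 : r2 ^ 3 - ψ * r2 ^ 2 + E * r2 - F = 0 := (hr r2).mpr (Or.inr (Or.inl rfl))
  have h3 : r3 ^ 3 - ψ * r3 ^ 2 + E * r3 - F = 0 := (hr r3).mpr (Or.inr (Or.inr rfl))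
  -- Vieta for the roots
  have k12 : r1 ^ 2 + r1 * r2 + r2 ^ 2 - ψ * (r1 + r2) + E = 0 :=
    mul_left_cancel₀ (sub_ne_zero.mpr h12)
      (by linear_combination h1 - h2 :
        (r1 - r2) * (r1 ^ 2 + r1 * r2 + r2 ^ 2 - ψ * (r1 + r2) + E) = (r1 - r2) * 0)
  have k13 : r1 ^ 2 + r1 * r3 + r3 ^ 2 - ψ * (r1 + r3) + E = 0 :=
    mul_left_cancel₀ (sub_ne_zero.mpr h13)
      (by linear_combination h1 - h3 :
        (r1 - r3) * (r1 ^ 2 + r1 * r3 + r3 ^ 2 - ψ * (r1 + r3) + E) = (r1 - r3) * 0)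
  have hs : r1 + r2 + r3 = ψ := by
    have hcan : (r2 - r3) * (r1 + r2 + r3 - ψ) = (r2 - r3) * 0 := by
      linear_combination k12 - k13
    have := mul_left_cancel₀ (sub_ne_zero.mpr h23) hcan
    linear_combination this
  have he2 : r1 * r2 + r1 * r3 + r2 * r3 = E := by
    linear_combination (-1 : ℂ) * k12 + (r1 + r2) * hs
  have he3 : r1 * (r2 * r3) = F := by
    linear_combination h1 - r1 ^ 2 * hs + r1 * he2
  have hr1 : r1 ≠ 0 := fun h => hE3 (by rw [← he3, h]; ring)
  have hr2 : r2 ≠ 0 := fun h => hE3 (by rw [← he3, h]; ring)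
  have hr3 : r3 ≠ 0 := fun h => hE3 (by rw [← he3, h]; ring)
  have hTr : TrF a b ψ =
      {(r1, r2, r3), (r1, r3, r2), (r2, r1, r3), (r2, r3, r1), (r3, r1, r2), (r3, r2, r1)} := by
    ext t
    obtain ⟨x, y, z⟩ := t
    rw [mem_TrF]
    simp only [Finset.mem_insert, Finset.mem_singleton, Prod.mk.injEq]
    constructor
    · rintro ⟨ht1, ht2, ht3⟩
      have hxroot : x = r1 ∨ x = r2 ∨ x = r3 := by
        rw [← hr]
        linear_combination x ^ 2 * ht1 - x * ht2 + ht3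
      rcases hxroot with hx | hx | hx
      · have hsum : y + z = r2 + r3 := by linear_combination ht1 - hs - hx
        have hprod : r1 * (y * z) = r1 * (r2 * r3) := by
          linear_combination ht3 - he3 - (y * z) * hx
        rcases two_of_three r1 r2 r3 y z hr1 hsum hprod with ⟨hy, hz⟩ | ⟨hy, hz⟩
        · exact Or.inl ⟨hx, hy, hz⟩
        · exact Or.inr (Or.inl ⟨hx, hy, hz⟩)
      · have hsum : y + z = r1 + r3 := by linear_combination ht1 - hs - hx
        have hprod : r2 * (y * z) = r2 * (r1 * r3) := by
          linear_combination ht3 - he3 - (y * z) * hx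
        rcases two_of_three r2 r1 r3 y z hr2 hsum hprod with ⟨hy, hz⟩ | ⟨hy, hz⟩
        · exact Or.inr (Or.inr (Or.inl ⟨hx, hy, hz⟩))
        · exact Or.inr (Or.inr (Or.inr (Or.inl ⟨hx, hy, hz⟩)))
      · have hsum : y + z = r1 + r2 := by linear_combination ht1 - hs - hx
        have hprod : r3 * (y * z) = r3 * (r1 * r2) := by
          linear_combination ht3 - he3 - (y * z) * hx
        rcases two_of_three r3 r1 r2 y z hr3 hsum hprod with ⟨hy, hz⟩ | ⟨hy, hz⟩
        · exact Or.inr (Or.inr (Or.inr (Or.inr (Or.inl ⟨hx, hy, hz⟩))))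
        · exact Or.inr (Or.inr (Or.inr (Or.inr (Or.inr ⟨hx, hy, hz⟩))))
    · rintro (⟨hx, hy, hz⟩ | ⟨hx, hy, hz⟩ | ⟨hx, hy, hz⟩ | ⟨hx, hy, hz⟩ | ⟨hx, hy, hz⟩ |
        ⟨hx, hy, hz⟩) <;> subst hx <;> subst hy <;> subst hz <;>
      exact ⟨by linear_combination hs, by linear_combination he2, by linear_combination he3⟩
  rw [hTr]
  have n12 := h12
  have n13 := h13
  have n23 := h23
  rw [Finset.card_insert_of_notMem (by intro hmem; simp [Prod.ext_iff] at hmem; tauto),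
    Finset.card_insert_of_notMem (by intro hmem; simp [Prod.ext_iff] at hmem; tauto),
    Finset.card_insert_of_notMem (by intro hmem; simp [Prod.ext_iff] at hmem; tauto),
    Finset.card_insert_of_notMem (by intro hmem; simp [Prod.ext_iff] at hmem; tauto),
    Finset.card_insert_of_notMem (by intro hmem; simp [Prod.ext_iff] at hmem; tauto),
    Finset.card_singleton]

/-- there is a nonzero polynomial p in (a,b,c) such that whenever
p(a,b,c) ≠ 0 the system (S) has exactly 1296 solutions (u,v,w). -/
theorem system_has_1296_solutions_generically :
    ∃ p : MvPolynomial (Fin 3) ℂ, p ≠ 0 ∧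
      ∀ a b c : ℂ, MvPolynomial.eval ![a, b, c] p ≠ 0 →
        {t : ℂ × ℂ × ℂ | sysS a b c t.1 t.2.1 t.2.2}.ncard = 1296 := by
  classical
  refine ⟨MvPolynomial.X 1 * (MvPolynomial.X 1 ^ 3 - MvPolynomial.X 2 ^ 2) *
    (MvPolynomial.X 0 ^ 3 - 3 * MvPolynomial.X 0 * MvPolynomial.X 1 + 2 * MvPolynomial.X 2),
    ?_, ?_⟩
  · intro h0
    have h1 := congrArg (MvPolynomial.eval ![(0 : ℂ), 1, 2]) h0
    simp only [map_mul, map_sub, map_add, map_pow, map_ofNat, MvPolynomial.eval_X,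
      map_zero] at h1
    norm_num [Matrix.cons_val_zero, Matrix.cons_val_one, Matrix.head_cons, Matrix.cons_val_two,
      Matrix.tail_cons] at h1
  · intro a b c hpr
    simp only [map_mul, map_sub, map_add, map_pow, map_ofNat, MvPolynomial.eval_X] at hpr
    norm_num [Matrix.cons_val_zero, Matrix.cons_val_one, Matrix.head_cons] at hpr
    obtain ⟨⟨hb, hbc⟩, habc⟩ := hpr
    set RF := (Qpoly b c).roots.toFinset with hRFdef
    have hRFcard : RF.card = 8 := RF_card b c hb hbc
    have hRFmem : ∀ ψ : ℂ, ψ ∈ RF ↔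
        27 * ψ ^ 8 - 18 * b * ψ ^ 4 - 8 * c * ψ ^ 2 - b ^ 2 = 0 := by
      intro ψ
      rw [hRFdef, mem_roots_toFinset _ (Qpoly_ne b c), Qpoly_eval]
    set F : Finset (ℂ × ℂ × ℂ) := RF.biUnion (fun ψ =>
      (TrF a b ψ).biUnion (fun t => cubF t.1 ×ˢ cubF t.2.1 ×ˢ cubF t.2.2)) with hFdef
    have hmemF : ∀ u v w : ℂ, ((u, v, w) ∈ F ↔
        ∃ ψ ∈ RF, ∃ t ∈ TrF a b ψ, u ^ 3 = t.1 ∧ v ^ 3 = t.2.1 ∧ w ^ 3 = t.2.2) := by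
      intro u v w
      simp only [hFdef, Finset.mem_biUnion, Finset.mem_product, cubF_mem]
    have hset : {t : ℂ × ℂ × ℂ | sysS a b c t.1 t.2.1 t.2.2} = ↑F := by
      ext ⟨u, v, w⟩
      simp only [Set.mem_setOf_eq, Finset.mem_coe]
      rw [hmemF u v w]
      constructor
      · rintro ⟨E1, E2q, E3q⟩
        have hψq : 27 * (u ^ 3 + v ^ 3 + w ^ 3) ^ 8
            - 18 * b * (u ^ 3 + v ^ 3 + w ^ 3) ^ 4
            - 8 * c * (u ^ 3 + v ^ 3 + w ^ 3) ^ 2 - b ^ 2 = 0 := by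
          linear_combination (19 * (u ^ 3 + v ^ 3 + w ^ 3) ^ 4
            + (216 * (u ^ 3 * v ^ 3 * w ^ 3)) * (u ^ 3 + v ^ 3 + w ^ 3) + b) * E2q
            + 8 * (u ^ 3 + v ^ 3 + w ^ 3) ^ 2 * E3q
        have hψ0 := psi_ne b c _ hb hψq
        refine ⟨u ^ 3 + v ^ 3 + w ^ 3, (hRFmem _).mpr hψq, (u ^ 3, v ^ 3, w ^ 3), ?_,
          rfl, rfl, rfl⟩
        rw [mem_TrF]
        have h2cv := h2c a (u ^ 3 + v ^ 3 + w ^ 3)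
        have h3cv := h3c b c _ hb hψq
        refine ⟨rfl, ?_, ?_⟩
        · have h12 : (12 : ℂ) ≠ 0 := by norm_num
          apply mul_left_cancel₀ h12
          linear_combination -E1 - h2cv
        · have h216 : (216 : ℂ) * (u ^ 3 + v ^ 3 + w ^ 3) ≠ 0 := by
            exact mul_ne_zero (by norm_num) hψ0
          apply mul_left_cancel₀ h216
          linear_combination E2q - h3cv
      · rintro ⟨ψ, hψRF, t, ht, hu, hv, hw⟩
        have hψq := (hRFmem ψ).mp hψRF
        have hψ0 := psi_ne b c ψ hb hψq
        rw [mem_TrF] at ht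
        obtain ⟨h1t, h2t, h3t⟩ := ht
        have h2cv := h2c a ψ
        have h3cv := h3c b c ψ hb hψq
        have heq3 : ψ ^ 6 - (5 / 2) * (216 * e3v b ψ) * ψ ^ 3
            - (1 / 8) * (216 * e3v b ψ) ^ 2 * (ψ ^ 2 / ψ ^ 2) = c * (ψ ^ 2 / ψ ^ 2) := by
          rw [div_self (pow_ne_zero 2 hψ0)]
          have hm : 8 * ψ ^ 2 * (ψ ^ 6 - (5 / 2) * (216 * e3v b ψ) * ψ ^ 3
              - (1 / 8) * (216 * e3v b ψ) ^ 2 - c) = 0 := by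
            linear_combination hψq +
              (-20 * ψ ^ 4 - 216 * ψ * e3v b ψ - (b - ψ ^ 4)) * h3cv
          have h8 : (8 : ℂ) * ψ ^ 2 ≠ 0 := mul_ne_zero (by norm_num) (pow_ne_zero 2 hψ0)
          have := (mul_eq_zero.mp hm).resolve_left h8
          linear_combination this
        rw [div_self (pow_ne_zero 2 hψ0), mul_one, mul_one] at heq3
        refine ⟨?_, ?_, ?_⟩
        · rw [hu, hv, hw]
          linear_combination (t.1 + t.2.1 + t.2.2 + ψ) * h1t - 12 * h2t - h2cv
        · rw [hu, hv, hw]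
          linear_combination ((t.1 + t.2.1 + t.2.2) ^ 3 + (t.1 + t.2.1 + t.2.2) ^ 2 * ψ
            + (t.1 + t.2.1 + t.2.2) * ψ ^ 2 + ψ ^ 3
            + 216 * (t.1 * (t.2.1 * t.2.2))) * h1t + 216 * ψ * h3t + h3cv
        · rw [hu, hv, hw]
          linear_combination heq3 + ((t.1 + t.2.1 + t.2.2) ^ 5
            + (t.1 + t.2.1 + t.2.2) ^ 4 * ψ + (t.1 + t.2.1 + t.2.2) ^ 3 * ψ ^ 2
            + (t.1 + t.2.1 + t.2.2) ^ 2 * ψ ^ 3 + (t.1 + t.2.1 + t.2.2) * ψ ^ 4 + ψ ^ 5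
            - 540 * (t.1 * (t.2.1 * t.2.2)) * ((t.1 + t.2.1 + t.2.2) ^ 2
              + (t.1 + t.2.1 + t.2.2) * ψ + ψ ^ 2)) * h1t
            + (-540 * ψ ^ 3 - 5832 * (t.1 * (t.2.1 * t.2.2) + e3v b ψ)) * h3t
    rw [hset, Set.ncard_coe_finset, hFdef]
    rw [Finset.card_biUnion ?outer]
    case outer =>
      intro ψ hψ ψ' hψ' hne
      rw [Function.onFun, Finset.disjoint_left]
      rintro ⟨u, v, w⟩ hmem hmem'
      simp only [Finset.mem_biUnion, Finset.mem_product, cubF_mem] at hmem hmem'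
      obtain ⟨t, ht, hu, hv, hw⟩ := hmem
      obtain ⟨t', ht', hu', hv', hw'⟩ := hmem'
      rw [mem_TrF] at ht ht'
      apply hne
      rw [← ht.1, ← ht'.1, ← hu, ← hv, ← hw, ← hu', ← hv', ← hw']
    have hinner : ∀ ψ ∈ RF,
        ((TrF a b ψ).biUnion (fun t => cubF t.1 ×ˢ cubF t.2.1 ×ˢ cubF t.2.2)).card = 162 := by
      intro ψ hψRF
      have hψq := (hRFmem ψ).mp hψRF
      have hE3 := e3v_ne b c ψ hb hbc hψq
      rw [Finset.card_biUnion ?inner]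
      case inner =>
        intro t ht t' ht' hne
        rw [Function.onFun, Finset.disjoint_left]
        rintro ⟨u, v, w⟩ hmem hmem'
        simp only [Finset.mem_product, cubF_mem] at hmem hmem'
        apply hne
        obtain ⟨hu, hv, hw⟩ := hmem
        obtain ⟨hu', hv', hw'⟩ := hmem'
        exact Prod.ext (hu ▸ hu') (Prod.ext (hv ▸ hv') (hw ▸ hw'))
      have hconst : ∀ t ∈ TrF a b ψ, (cubF t.1 ×ˢ cubF t.2.1 ×ˢ cubF t.2.2).card = 27 := by
        intro t ht
        rw [mem_TrF] at ht
        obtain ⟨h1t, h2t, h3t⟩ := ht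
        have hprodne : t.1 * (t.2.1 * t.2.2) ≠ 0 := by rw [h3t]; exact hE3
        have ht1 : t.1 ≠ 0 := fun h => hprodne (by rw [h, zero_mul])
        have ht2 : t.2.1 ≠ 0 := fun h => hprodne (by rw [h]; ring)
        have ht3 : t.2.2 ≠ 0 := fun h => hprodne (by rw [h]; ring)
        rw [Finset.card_product, Finset.card_product, cubF_card _ ht1, cubF_card _ ht2,
          cubF_card _ ht3]
      rw [Finset.sum_congr rfl hconst, Finset.sum_const,
        TrF_card a b c ψ hb hbc habc hψq]
      norm_num
    rw [Finset.sum_congr rfl hinner, Finset.sum_const, hRFcard]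
    norm_num
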